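/- arXiv:1003.3319 — 7 statements merged into one kernel-verified Lean document; each statement's English description precedes it below -/
import Mathlib

section
/- Growth estimate for perturbed diagonal systems: let (λ_n) be a sequence of nonzero complex numbers and (R_n) a sequence of 2×2 complex matrices with S := Σ_{k=1}^∞ ‖R_k‖/|λ_k| < ∞. Suppose there exists M > 0 such that ∏_{l=n+1}^{m} |λ_l| ≥ 1/M for all m ≥ n ≥ 0. Then every solution (x_n) of x_{n+1} = (diag(λ_n, 1/λ_n) + R_n)·x_n, n ≥ 1, satisfies ‖x_n‖ ≤ (∏_{l=1}^{n-1} |λ_l|)·exp((1+M²)·S)·(1+M²)·‖x_1‖ for all n ≥ 1. -/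
open Finset

/-!
Variation of constants, coordinate by coordinate, writes `x (n + 1)` as the initial value and the
perturbations `R k (x k)` transported by the diagonal part. Its propagators `∏ λ` and `∏ λ⁻¹` are
both at most a constant times `∏ |λ|`: the first trivially, the second with constant `M ^ 2`,
because `1 / M ≤ ∏ |λ|` gives `(∏ |λ|)⁻¹ ≤ M ≤ M ^ 2 * ∏ |λ|`. Dividing by `∏_{l < n} |λ_l|` then
leaves a discrete Gronwall inequality with weights `(1 + M ^ 2) * ‖R k‖ / |λ_k|`, and
`∏ (1 + b_k) ≤ exp (∑ b_k)`.
-/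

theorem eq_prod_mul_add_sum_of_succ_eq {α : Type*} [CommSemiring α] {μ w z : ℕ → α}
    (h : ∀ n, z (n + 1) = μ n * z n + w n) (n : ℕ) :
    z n = (∏ i ∈ range n, μ i) * z 0 + ∑ k ∈ range n, (∏ i ∈ Ico (k + 1) n, μ i) * w k := by
  induction n with
  | zero => simp
  | succ n ih =>
    have propagate : ∀ k ∈ range n, μ n * ((∏ i ∈ Ico (k + 1) n, μ i) * w k) =
        (∏ i ∈ Ico (k + 1) (n + 1), μ i) * w k := fun k hk => by
      rw [prod_Ico_succ_top (mem_range.1 hk)]; ring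
    rw [h, ih, prod_range_succ, sum_range_succ, Ico_self, prod_empty, one_mul, mul_add, mul_sum,
      sum_congr rfl propagate]
    ring

theorem le_mul_prod_one_add_of_le_add_sum {u b : ℕ → ℝ} {A : ℝ} (hb : ∀ k, 0 ≤ b k)
    (h : ∀ n, u n ≤ A + ∑ k ∈ range n, b k * u k) (n : ℕ) :
    u n ≤ A * ∏ k ∈ range n, (1 + b k) := by
  induction n using Nat.strong_induction_on with
  | _ n ih =>
    have telescope : ∀ k, b k * (A * ∏ j ∈ range k, (1 + b j)) =
        A * ∏ j ∈ range (k + 1), (1 + b j) - A * ∏ j ∈ range k, (1 + b j) := fun k => by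
      rw [prod_range_succ]; ring
    calc u n ≤ A + ∑ k ∈ range n, b k * (A * ∏ j ∈ range k, (1 + b j)) :=
          (h n).trans <| by
            gcongr with k hk
            exacts [hb k, ih k (mem_range.1 hk)]
      _ = A * ∏ k ∈ range n, (1 + b k) := by
          rw [sum_congr rfl fun k _ => telescope k,
            sum_range_sub (fun k => A * ∏ j ∈ range k, (1 + b j)), prod_range_zero]; ring

theorem le_mul_exp_tsum_of_le_add_sum {u b : ℕ → ℝ} {A : ℝ} (hA : 0 ≤ A) (hb : ∀ k, 0 ≤ b k)
    (hsum : Summable b) (h : ∀ n, u n ≤ A + ∑ k ∈ range n, b k * u k) (n : ℕ) :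
    u n ≤ A * Real.exp (∑' k, b k) :=
  (le_mul_prod_one_add_of_le_add_sum hb h n).trans <| mul_le_mul_of_nonneg_left
    ((Real.prod_one_add_le_exp_sum _ hb).trans <|
      Real.exp_le_exp.2 (hsum.sum_le_tsum _ fun k _ => hb k)) hA

theorem inv_le_sq_mul_of_one_div_le {M p : ℝ} (hM : 0 < M) (h : 1 / M ≤ p) : p⁻¹ ≤ M ^ 2 * p := by
  have hp : 0 < p := (one_div_pos.2 hM).trans_le h
  calc p⁻¹ ≤ M := by rw [inv_le_comm₀ hp hM, ← one_div]; exact h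
    _ = M ^ 2 * (1 / M) := by field_simp
    _ ≤ M ^ 2 * p := by gcongr

theorem EuclideanSpace.norm_le_sum_norm {𝕜 ι : Type*} [RCLike 𝕜] [Fintype ι]
    (v : EuclideanSpace 𝕜 ι) : ‖v‖ ≤ ∑ i, ‖v i‖ := by
  rw [EuclideanSpace.norm_eq, Real.sqrt_le_left (sum_nonneg fun i _ => norm_nonneg _)]
  exact sum_sq_le_sq_sum_of_nonneg fun i _ => norm_nonneg _

theorem Matrix.toEuclideanCLM_diagonal_apply {𝕜 ι : Type*} [RCLike 𝕜] [Fintype ι] [DecidableEq ι]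
    (d : ι → 𝕜) (v : EuclideanSpace 𝕜 ι) (i : ι) :
    Matrix.toEuclideanCLM (𝕜 := 𝕜) (Matrix.diagonal d) v i = d i * v i := by
  simp [Matrix.mulVec_diagonal]

theorem prod_Icc_succ_eq_prod_Ico {M : Type*} [CommMonoid M] (f : ℕ → M) (k n : ℕ) :
    ∏ i ∈ Icc (k + 1) n, f i = ∏ m ∈ Ico k n, f (m + 1) := by
  rw [prod_Ico_add', Ico_add_one_right_eq_Icc]

section PerturbedDiagonal

variable {𝕜 ι : Type*} [RCLike 𝕜] [Fintype ι] [DecidableEq ι] {d : ℕ → ι → 𝕜}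
  {R : ℕ → EuclideanSpace 𝕜 ι →L[𝕜] EuclideanSpace 𝕜 ι} {x : ℕ → EuclideanSpace 𝕜 ι}
  {ρ : ℕ → ℝ} {B : ι → ℝ}

theorem norm_le_of_perturbed_diagonal
    (hd : ∀ i k n, k ≤ n → ‖∏ m ∈ Ico k n, d m i‖ ≤ B i * ∏ m ∈ Ico k n, ρ m)
    (hx : ∀ n, x (n + 1) = (Matrix.toEuclideanCLM (𝕜 := 𝕜) (Matrix.diagonal (d n)) + R n) (x n))
    (n : ℕ) :
    ‖x n‖ ≤ (∑ i, B i) * ((∏ m ∈ range n, ρ m) * ‖x 0‖ +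
      ∑ k ∈ range n, (∏ m ∈ Ico (k + 1) n, ρ m) * (‖R k‖ * ‖x k‖)) := by
  have hBρ : ∀ i k, k ≤ n → 0 ≤ B i * ∏ m ∈ Ico k n, ρ m := fun i k hk =>
    (norm_nonneg _).trans (hd i k n hk)
  have coord : ∀ i, ‖x n i‖ ≤ B i * ((∏ m ∈ range n, ρ m) * ‖x 0‖ +
      ∑ k ∈ range n, (∏ m ∈ Ico (k + 1) n, ρ m) * (‖R k‖ * ‖x k‖)) := fun i => by
    rw [eq_prod_mul_add_sum_of_succ_eq (z := fun n => x n i) (μ := fun n => d n i)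
      (w := fun n => R n (x n) i)
      (fun n => by simp [hx, Matrix.toEuclideanCLM_diagonal_apply]) n, mul_add, mul_sum]
    refine (norm_add_le _ _).trans (add_le_add ?_ ((norm_sum_le _ _).trans (sum_le_sum ?_)))
    · rw [norm_mul, ← mul_assoc, range_eq_Ico]
      exact mul_le_mul (hd i 0 n n.zero_le) (PiLp.norm_apply_le _ _) (norm_nonneg _)
        (hBρ i 0 n.zero_le)
    · intro k hk
      rw [norm_mul, ← mul_assoc]
      exact mul_le_mul (hd i (k + 1) n (mem_range.1 hk))
        ((PiLp.norm_apply_le _ _).trans ((R k).le_opNorm _)) (norm_nonneg _)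
        (hBρ i (k + 1) (mem_range.1 hk))
  calc ‖x n‖ ≤ ∑ i, ‖x n i‖ := EuclideanSpace.norm_le_sum_norm _
    _ ≤ _ := (sum_le_sum fun i _ => coord i).trans_eq (sum_mul ..).symm

theorem norm_le_prod_mul_exp_of_perturbed_diagonal (hρ : ∀ n, 0 < ρ n)
    (hd : ∀ i k n, k ≤ n → ‖∏ m ∈ Ico k n, d m i‖ ≤ B i * ∏ m ∈ Ico k n, ρ m)
    (hR : Summable fun k => ‖R k‖ / ρ k)
    (hx : ∀ n, x (n + 1) = (Matrix.toEuclideanCLM (𝕜 := 𝕜) (Matrix.diagonal (d n)) + R n) (x n))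
    (n : ℕ) :
    ‖x n‖ ≤ (∏ m ∈ range n, ρ m) * Real.exp ((∑ i, B i) * ∑' k, ‖R k‖ / ρ k) *
      (∑ i, B i) * ‖x 0‖ := by
  have bound := norm_le_of_perturbed_diagonal hd hx
  set K := ∑ i, B i
  have hK : 0 ≤ K := sum_nonneg fun i _ => by simpa using (norm_nonneg _).trans (hd i 0 0 le_rfl)
  clear_value K
  have hP : ∀ n, 0 < ∏ m ∈ range n, ρ m := fun n => prod_pos fun m _ => hρ m
  have gronwall : ∀ n, ‖x n‖ / ∏ m ∈ range n, ρ m ≤ K * ‖x 0‖ +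
      ∑ k ∈ range n, K * (‖R k‖ / ρ k) * (‖x k‖ / ∏ m ∈ range k, ρ m) := fun n => by
    rw [div_le_iff₀ (hP n)]
    refine (bound n).trans_eq ?_
    rw [mul_add, mul_sum, add_mul, sum_mul]
    refine congrArg₂ (· + ·) (by ring) (sum_congr rfl fun k hk => ?_)
    rw [← prod_range_mul_prod_Ico ρ (mem_range.1 hk), prod_range_succ]
    field_simp [(hρ k).ne', (hP k).ne']
  have scaled := le_mul_exp_tsum_of_le_add_sum (mul_nonneg hK (norm_nonneg _))
    (fun k => mul_nonneg hK (div_nonneg (norm_nonneg _) (hρ k).le)) (hR.mul_left K) gronwall n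
  rw [div_le_iff₀ (hP n), tsum_mul_left] at scaled
  linarith

end PerturbedDiagonal

theorem growth_estimate_perturbed_diagonal
    (l : ℕ → ℂ) (hl : ∀ n, l n ≠ 0)
    (R : ℕ → EuclideanSpace ℂ (Fin 2) →L[ℂ] EuclideanSpace ℂ (Fin 2))
    (hS : Summable fun k : ℕ => ‖R (k + 1)‖ / ‖l (k + 1)‖)
    (M : ℝ) (hM : 0 < M)
    (hprod : ∀ m n : ℕ, n ≤ m → (1 : ℝ) / M ≤ ∏ i ∈ Finset.Icc (n + 1) m, ‖l i‖)
    (x : ℕ → EuclideanSpace ℂ (Fin 2))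
    (hx : ∀ n, 1 ≤ n →
      x (n + 1) =
        (Matrix.toEuclideanCLM (𝕜 := ℂ) (Matrix.diagonal ![l n, (l n)⁻¹]) + R n) (x n)) :
    ∀ n, 1 ≤ n →
      ‖x n‖ ≤ (∏ i ∈ Finset.Icc 1 (n - 1), ‖l i‖) *
        Real.exp ((1 + M ^ 2) * ∑' k : ℕ, ‖R (k + 1)‖ / ‖l (k + 1)‖) *
        (1 + M ^ 2) * ‖x 1‖ := by
  intro n hn
  obtain ⟨n, rfl⟩ := Nat.exists_eq_add_of_le' hn
  have hd : ∀ i k n, k ≤ n → ‖∏ m ∈ Ico k n, ![l (m + 1), (l (m + 1))⁻¹] i‖ ≤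
      ![1, M ^ 2] i * ∏ m ∈ Ico k n, ‖l (m + 1)‖ := by
    intro i k n hkn
    fin_cases i
    · simp [norm_prod]
    · simpa [norm_prod, prod_inv_distrib] using
        inv_le_sq_mul_of_one_div_le hM ((hprod n k hkn).trans_eq (prod_Icc_succ_eq_prod_Ico _ k n))
  have shifted := norm_le_prod_mul_exp_of_perturbed_diagonal (x := fun n => x (n + 1))
    (fun n => norm_pos_iff.2 (hl (n + 1))) hd hS (fun n => hx (n + 1) (Nat.le_add_left 1 n)) n
  simpa [Fin.sum_univ_two, prod_Icc_succ_eq_prod_Ico _ 0, ← range_eq_Ico] using shifted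
end

section
/- Asymptotics in the bounded (elliptic) case: under the hypotheses Σ_{k=1}^∞ ‖R_k‖/|λ_k| < ∞, the existence of M with ∏_{l=n+1}^m |λ_l| ≥ 1/M for all m ≥ n, and sup_n ∏_{l=1}^n |λ_l| < ∞, every solution x of x_{n+1} = (Λ_n + R_n)x_n with Λ_n = diag(λ_n, 1/λ_n) satisfies: the limit lim_{n→∞} (∏_{l=1}^{n-1} Λ_l)^{-1} x_n exists, the series Σ_{k=1}^∞ (∏_{l=1}^k Λ_l)^{-1} R_k x_k converges absolutely, and the limit equals x_1 + Σ_{k=1}^∞ (∏_{l=1}^k Λ_l)^{-1} R_k x_k. -/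
/-!
Put `y n = (Λ_1 ⋯ Λ_n)⁻¹ x (n + 1)`. The recurrence turns into
`y (n + 1) - y n = (Λ_1 ⋯ Λ_(n+1))⁻¹ R_(n+1) x (n + 1)`, and since `1 / M ≤ |λ_1 ⋯ λ_n| ≤ C`
bounds both `(Λ_1 ⋯ Λ_n)⁻¹` and `Λ_1 ⋯ Λ_n` by `K = max M C`, this increment has norm at most
`K² ‖R_(n+1)‖ ‖y n‖`. The same bounds give `|λ_(n+1)| ≤ C M`, so `∑ ‖R_k‖ < ∞`. A discrete
Gronwall inequality then bounds `y`, the increments are absolutely summable, and `y n` converges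
to `y 0 + ∑ (y (k + 1) - y k)`.
-/

open Matrix Filter Finset

section DiscreteGronwall

variable {E : Type*} [SeminormedAddCommGroup E] {y : ℕ → E} {a : ℕ → ℝ}

theorem norm_le_mul_exp_sum_of_norm_sub_le (h : ∀ n, ‖y (n + 1) - y n‖ ≤ a n * ‖y n‖) (n : ℕ) :
    ‖y n‖ ≤ ‖y 0‖ * Real.exp (∑ k ∈ range n, a k) := by
  induction n with
  | zero => simp
  | succ n ih =>
    calc ‖y (n + 1)‖ ≤ ‖y n‖ + ‖y (n + 1) - y n‖ := norm_le_insert' _ _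
      _ ≤ ‖y n‖ * Real.exp (a n) := by
        nlinarith [h n, Real.add_one_le_exp (a n), norm_nonneg (y n)]
      _ ≤ ‖y 0‖ * Real.exp (∑ k ∈ range n, a k) * Real.exp (a n) := by gcongr
      _ = ‖y 0‖ * Real.exp (∑ k ∈ range (n + 1), a k) := by
        rw [sum_range_succ, Real.exp_add, mul_assoc]

theorem summable_norm_sub_of_norm_sub_le (ha₀ : 0 ≤ a) (ha : Summable a)
    (h : ∀ n, ‖y (n + 1) - y n‖ ≤ a n * ‖y n‖) : Summable fun n => ‖y (n + 1) - y n‖ := by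
  obtain ⟨B, hB⟩ : ∃ B, ∀ n, ‖y n‖ ≤ B := ⟨‖y 0‖ * Real.exp (∑' k, a k), fun n =>
    (norm_le_mul_exp_sum_of_norm_sub_le h n).trans <| by
      gcongr; exact ha.sum_le_tsum _ fun k _ => ha₀ k⟩
  refine .of_nonneg_of_le (fun _ => norm_nonneg _) (fun n => ?_) (ha.mul_right B)
  exact (h n).trans (mul_le_mul_of_nonneg_left (hB n) (ha₀ n))

theorem tendsto_add_tsum_sub_of_summable_norm_sub [CompleteSpace E]
    (h : Summable fun n => ‖y (n + 1) - y n‖) :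
    Tendsto y atTop (nhds (y 0 + ∑' n, (y (n + 1) - y n))) := by
  refine (h.of_norm.hasSum.tendsto_sum_nat.const_add (y 0)).congr fun n => ?_
  rw [sum_range_sub, add_sub_cancel]

end DiscreteGronwall

theorem Summable.of_summable_div_of_le {ι : Type*} {f g : ι → ℝ} {B : ℝ}
    (hfg : Summable fun i => f i / g i) (hf : 0 ≤ f) (hg : ∀ i, 0 < g i) (hgB : ∀ i, g i ≤ B) :
    Summable f := by
  refine .of_nonneg_of_le hf (fun i => ?_) (hfg.mul_left B)
  calc f i = f i / g i * g i := (div_mul_cancel₀ _ (hg i).ne').symm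
    _ ≤ f i / g i * B := mul_le_mul_of_nonneg_left (hgB i) (div_nonneg (hf i) (hg i).le)
    _ = B * (f i / g i) := mul_comm _ _

section Diag2

variable {𝕜 : Type*} [RCLike 𝕜]

noncomputable def diag2 (a b : 𝕜) : EuclideanSpace 𝕜 (Fin 2) →L[𝕜] EuclideanSpace 𝕜 (Fin 2) :=
  toEuclideanCLM (𝕜 := 𝕜) (diagonal ![a, b])

open scoped Matrix.Norms.L2Operator in
theorem norm_diag2_le (a b : 𝕜) : ‖diag2 a b‖ ≤ max ‖a‖ ‖b‖ := by
  rw [diag2, l2_opNorm_toEuclideanCLM, l2_opNorm_diagonal,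
    pi_norm_le_iff_of_nonneg ((norm_nonneg a).trans (le_max_left _ _)), Fin.forall_fin_two]
  exact ⟨le_max_left _ _, le_max_right _ _⟩

theorem diag2_apply_diag2 (a b c d : 𝕜) (v : EuclideanSpace 𝕜 (Fin 2)) :
    diag2 a b (diag2 c d v) = diag2 (a * c) (b * d) v := by
  rw [diag2, diag2, diag2, ← mul_apply_eq_comp, ← map_mul, diagonal_mul_diagonal]
  congr 3
  ext i
  fin_cases i <;> rfl

theorem diag2_one_one : diag2 (1 : 𝕜) 1 = 1 := by
  rw [diag2, ← map_one (toEuclideanCLM (𝕜 := 𝕜) (n := Fin 2)), ← diagonal_one]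
  congr 2
  ext i
  fin_cases i <;> rfl

theorem diag2_inv_mul_apply_diag2 (p : 𝕜) {q : 𝕜} (hq : q ≠ 0) (v : EuclideanSpace 𝕜 (Fin 2)) :
    diag2 (p * q)⁻¹ (p * q) (diag2 q q⁻¹ v) = diag2 p⁻¹ p v := by
  rw [diag2_apply_diag2, mul_inv, mul_assoc, inv_mul_cancel₀ hq, mul_one, mul_assoc,
    mul_inv_cancel₀ hq, mul_one]

theorem diag2_apply_diag2_inv_inv {p : 𝕜} (hp : p ≠ 0) (v : EuclideanSpace 𝕜 (Fin 2)) :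
    diag2 p p⁻¹ (diag2 p⁻¹ p v) = v := by
  rw [diag2_apply_diag2, mul_inv_cancel₀ hp, inv_mul_cancel₀ hp, diag2_one_one]
  rfl

theorem max_norm_inv_norm_le {p : 𝕜} {M C : ℝ} (hM : 0 < M) (hlow : 1 / M ≤ ‖p‖) (hup : ‖p‖ ≤ C) :
    max ‖p⁻¹‖ ‖p‖ ≤ max M C := by
  refine max_le_max ?_ hup
  rw [norm_inv]
  exact inv_le_of_inv_le₀ hM (by rwa [one_div] at hlow)

end Diag2

section EllipticCase

variable {l : ℕ → ℂ} {M C : ℝ}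

noncomputable def invProdDiag (l : ℕ → ℂ) (n : ℕ) :
    EuclideanSpace ℂ (Fin 2) →L[ℂ] EuclideanSpace ℂ (Fin 2) :=
  diag2 (∏ i ∈ Icc 1 n, l i)⁻¹ (∏ i ∈ Icc 1 n, l i)

theorem invProdDiag_zero (l : ℕ → ℂ) : invProdDiag l 0 = 1 := by
  simp [invProdDiag, diag2_one_one]

theorem invProdDiag_succ_apply_diag2 (n : ℕ) (hl : l (n + 1) ≠ 0) (v : EuclideanSpace ℂ (Fin 2)) :
    invProdDiag l (n + 1) (diag2 (l (n + 1)) (l (n + 1))⁻¹ v) = invProdDiag l n v := by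
  rw [invProdDiag, prod_Icc_succ_top (Nat.le_add_left 1 n), diag2_inv_mul_apply_diag2 _ hl]
  rfl

theorem norm_invProdDiag_le (hM : 0 < M) (hlow : ∀ n, 1 / M ≤ ‖∏ i ∈ Icc 1 n, l i‖)
    (hup : ∀ n, ‖∏ i ∈ Icc 1 n, l i‖ ≤ C) (n : ℕ) : ‖invProdDiag l n‖ ≤ max M C :=
  (norm_diag2_le _ _).trans (max_norm_inv_norm_le hM (hlow n) (hup n))

theorem norm_le_max_mul_norm_invProdDiag_apply (hM : 0 < M)
    (hlow : ∀ n, 1 / M ≤ ‖∏ i ∈ Icc 1 n, l i‖) (hup : ∀ n, ‖∏ i ∈ Icc 1 n, l i‖ ≤ C) (n : ℕ)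
    (v : EuclideanSpace ℂ (Fin 2)) : ‖v‖ ≤ max M C * ‖invProdDiag l n v‖ := by
  set P := ∏ i ∈ Icc 1 n, l i
  have hP : P ≠ 0 := norm_pos_iff.1 ((one_div_pos.2 hM).trans_le (hlow n))
  have hK : ‖diag2 P P⁻¹‖ ≤ max M C :=
    (norm_diag2_le _ _).trans ((max_comm _ _).trans_le (max_norm_inv_norm_le hM (hlow n) (hup n)))
  calc ‖v‖ = ‖diag2 P P⁻¹ (invProdDiag l n v)‖ := by
        rw [invProdDiag, diag2_apply_diag2_inv_inv hP]
    _ ≤ max M C * ‖invProdDiag l n v‖ := (ContinuousLinearMap.le_opNorm _ _).trans (by gcongr)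

theorem norm_invProdDiag_succ_apply_le (hM : 0 < M)
    (hlow : ∀ n, 1 / M ≤ ‖∏ i ∈ Icc 1 n, l i‖) (hup : ∀ n, ‖∏ i ∈ Icc 1 n, l i‖ ≤ C) (n : ℕ)
    (T : EuclideanSpace ℂ (Fin 2) →L[ℂ] EuclideanSpace ℂ (Fin 2)) (v : EuclideanSpace ℂ (Fin 2)) :
    ‖invProdDiag l (n + 1) (T v)‖ ≤ max M C ^ 2 * ‖T‖ * ‖invProdDiag l n v‖ := by
  have hK : 0 ≤ max M C := hM.le.trans (le_max_left _ _)
  calc ‖invProdDiag l (n + 1) (T v)‖ ≤ ‖invProdDiag l (n + 1)‖ * ‖T v‖ :=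
        ContinuousLinearMap.le_opNorm _ _
    _ ≤ max M C * (‖T‖ * ‖v‖) :=
        mul_le_mul (norm_invProdDiag_le hM hlow hup _) (T.le_opNorm v) (norm_nonneg _) hK
    _ ≤ max M C * (‖T‖ * (max M C * ‖invProdDiag l n v‖)) := by
        gcongr; exact norm_le_max_mul_norm_invProdDiag_apply hM hlow hup n v
    _ = max M C ^ 2 * ‖T‖ * ‖invProdDiag l n v‖ := by ring

theorem ne_zero_of_one_div_le_norm_prod_Icc (hM : 0 < M)
    (hlow : ∀ n, 1 / M ≤ ‖∏ i ∈ Icc 1 n, l i‖) (n : ℕ) : l (n + 1) ≠ 0 := by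
  have h := norm_pos_iff.1 ((one_div_pos.2 hM).trans_le (hlow (n + 1)))
  rw [prod_Icc_succ_top (Nat.le_add_left 1 n)] at h
  exact right_ne_zero_of_mul h

theorem norm_le_mul_of_norm_prod_Icc_le (hM : 0 < M)
    (hlow : ∀ n, 1 / M ≤ ‖∏ i ∈ Icc 1 n, l i‖) (hup : ∀ n, ‖∏ i ∈ Icc 1 n, l i‖ ≤ C) (n : ℕ) :
    ‖l (n + 1)‖ ≤ C * M := by
  have h := hup (n + 1)
  rw [prod_Icc_succ_top (Nat.le_add_left 1 n), norm_mul] at h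
  calc ‖l (n + 1)‖ = 1 / M * ‖l (n + 1)‖ * M := by field_simp
    _ ≤ ‖∏ i ∈ Icc 1 n, l i‖ * ‖l (n + 1)‖ * M := by gcongr; exact hlow n
    _ ≤ C * M := by gcongr

theorem invProdDiag_succ_apply_add_sub {n : ℕ} (hl : l (n + 1) ≠ 0)
    (T : EuclideanSpace ℂ (Fin 2) →L[ℂ] EuclideanSpace ℂ (Fin 2)) (v : EuclideanSpace ℂ (Fin 2)) :
    invProdDiag l (n + 1) ((diag2 (l (n + 1)) (l (n + 1))⁻¹ + T) v) - invProdDiag l n v =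
      invProdDiag l (n + 1) (T v) := by
  rw [_root_.add_apply, map_add, invProdDiag_succ_apply_diag2 n hl, add_sub_cancel_left]

end EllipticCase

theorem asymptotics_elliptic_case_general
    (l : ℕ → ℂ)
    (R : ℕ → EuclideanSpace ℂ (Fin 2) →L[ℂ] EuclideanSpace ℂ (Fin 2))
    (hS : Summable fun k : ℕ => ‖R (k + 1)‖ / ‖l (k + 1)‖)
    (M : ℝ) (hM : 0 < M)
    (hprod : ∀ m n : ℕ, n ≤ m → (1 : ℝ) / M ≤ ∏ i ∈ Finset.Icc (n + 1) m, ‖l i‖)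
    (hbdd : ∃ C : ℝ, ∀ n : ℕ, ∏ i ∈ Finset.Icc 1 n, ‖l i‖ ≤ C)
    (x : ℕ → EuclideanSpace ℂ (Fin 2))
    (hx : ∀ n, 1 ≤ n →
      x (n + 1) =
        (Matrix.toEuclideanCLM (𝕜 := ℂ) (Matrix.diagonal ![l n, (l n)⁻¹]) + R n) (x n)) :
    -- `ΛinvProd k` is the inverse of the product `Λ_1 ⋯ Λ_k` of the diagonal matrices
    let ΛinvProd : ℕ → EuclideanSpace ℂ (Fin 2) →L[ℂ] EuclideanSpace ℂ (Fin 2) :=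
      fun k => Matrix.toEuclideanCLM (𝕜 := ℂ)
        (Matrix.diagonal ![(∏ i ∈ Finset.Icc 1 k, l i)⁻¹, ∏ i ∈ Finset.Icc 1 k, l i])
    (Summable fun k : ℕ => ‖ΛinvProd (k + 1) ((R (k + 1)) (x (k + 1)))‖) ∧
      Tendsto (fun n : ℕ => ΛinvProd (n - 1) (x n)) atTop
        (nhds (x 1 + ∑' k : ℕ, ΛinvProd (k + 1) ((R (k + 1)) (x (k + 1))))) := by
  intro ΛinvProd
  simp only [show ΛinvProd = invProdDiag l from rfl]
  obtain ⟨C, hC⟩ := hbdd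
  have hlow (n : ℕ) : 1 / M ≤ ‖∏ i ∈ Icc 1 n, l i‖ := by
    simpa [norm_prod] using hprod n 0 n.zero_le
  have hup (n : ℕ) : ‖∏ i ∈ Icc 1 n, l i‖ ≤ C := (norm_prod _ _).trans_le (hC n)
  have hl := ne_zero_of_one_div_le_norm_prod_Icc hM hlow
  set y : ℕ → EuclideanSpace ℂ (Fin 2) := fun n => invProdDiag l n (x (n + 1))
  have hinc (n : ℕ) : y (n + 1) - y n = invProdDiag l (n + 1) (R (n + 1) (x (n + 1))) := by
    dsimp only [y]
    rw [hx (n + 1) n.succ_pos]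
    exact invProdDiag_succ_apply_add_sub (hl n) _ _
  have hR : Summable fun k => ‖R (k + 1)‖ :=
    hS.of_summable_div_of_le (fun _ => norm_nonneg _) (fun k => norm_pos_iff.2 (hl k))
      (norm_le_mul_of_norm_prod_Icc_le hM hlow hup)
  have hsum : Summable fun n => ‖y (n + 1) - y n‖ :=
    summable_norm_sub_of_norm_sub_le (fun _ => by positivity) (hR.mul_left (max M C ^ 2))
      fun n => (hinc n).symm ▸ norm_invProdDiag_succ_apply_le hM hlow hup n _ _
  have hlim := tendsto_add_tsum_sub_of_summable_norm_sub hsum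
  have hy0 : y 0 = x 1 := by simp [y, invProdDiag_zero]
  simp only [hinc, hy0] at hsum hlim
  refine ⟨hsum, (tendsto_add_atTop_iff_nat 1).1 ?_⟩
  simpa only [Nat.add_sub_cancel] using hlim

theorem asymptotics_elliptic_case
    (l : ℕ → ℂ) (hl : ∀ n, l n ≠ 0)
    (R : ℕ → EuclideanSpace ℂ (Fin 2) →L[ℂ] EuclideanSpace ℂ (Fin 2))
    (hS : Summable fun k : ℕ => ‖R (k + 1)‖ / ‖l (k + 1)‖)
    (M : ℝ) (hM : 0 < M)
    (hprod : ∀ m n : ℕ, n ≤ m → (1 : ℝ) / M ≤ ∏ i ∈ Finset.Icc (n + 1) m, ‖l i‖)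
    (hbdd : ∃ C : ℝ, ∀ n : ℕ, ∏ i ∈ Finset.Icc 1 n, ‖l i‖ ≤ C)
    (x : ℕ → EuclideanSpace ℂ (Fin 2))
    (hx : ∀ n, 1 ≤ n →
      x (n + 1) =
        (Matrix.toEuclideanCLM (𝕜 := ℂ) (Matrix.diagonal ![l n, (l n)⁻¹]) + R n) (x n)) :
    -- `ΛinvProd k` is the inverse of the product `Λ_1 ⋯ Λ_k` of the diagonal matrices
    let ΛinvProd : ℕ → EuclideanSpace ℂ (Fin 2) →L[ℂ] EuclideanSpace ℂ (Fin 2) :=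
      fun k => Matrix.toEuclideanCLM (𝕜 := ℂ)
        (Matrix.diagonal ![(∏ i ∈ Finset.Icc 1 k, l i)⁻¹, ∏ i ∈ Finset.Icc 1 k, l i])
    (Summable fun k : ℕ => ‖ΛinvProd (k + 1) ((R (k + 1)) (x (k + 1)))‖) ∧
      Tendsto (fun n : ℕ => ΛinvProd (n - 1) (x n)) atTop
        (nhds (x 1 + ∑' k : ℕ, ΛinvProd (k + 1) ((R (k + 1)) (x (k + 1))))) :=
  asymptotics_elliptic_case_general l R hS M hM hprod hbdd x hx
end

section
/- Asymptotics in the unbounded (hyperbolic) case: under the hypotheses Σ_{k=1}^∞ ‖R_k‖/|λ_k| < ∞, the existence of M with ∏_{l=n+1}^m |λ_l| ≥ 1/M for all m ≥ n, and ∏_{l=1}^n λ_l → ∞ in modulus as n → ∞, every solution x of x_{n+1} = (diag(λ_n,1/λ_n) + R_n)x_n satisfies: the limit lim_{n→∞} x_n / (∏_{l=1}^{n-1} λ_l) exists, the series Σ_{k=1}^∞ R_k x_k / (∏_{l=1}^k λ_l) converges absolutely, and the limit equals P·(x_1 + Σ_{k=1}^∞ R_k x_k/∏_{l=1}^k λ_l),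 where P = diag(1,0). -/
/-!
Dividing `x (n + 1)` by `∏ i ∈ Icc 1 n, l i` turns the system into
`y (n + 1) = (diag(1, l (n + 1)⁻¹ ^ 2) + (l (n + 1))⁻¹ • R (n + 1)) (y n)`, whose unperturbed
evolution from `k` to `n` is `diag(1, ∏ i ∈ Ioc k n, (l i)⁻¹ ^ 2)`: bounded by `M ^ 2` by the
hypothesis on the partial products, and tending to `P` as `n → ∞` because `∏ l` is unbounded.
Variation of constants writes `y n` as the evolved `y 0` plus the evolved perturbations; a
discrete Grönwall inequality bounds `y`, so the perturbation series converges absolutely, and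
Tannery's theorem (dominated convergence for series) passes to the limit term by term.
-/

open Matrix Filter Finset Topology

local notation "ℂ²" => EuclideanSpace ℂ (Fin 2)

noncomputable def diagOneCLM (t : ℂ) : ℂ² →L[ℂ] ℂ² :=
  toEuclideanCLM (𝕜 := ℂ) (diagonal ![1, t])

@[simp] lemma diagOneCLM_apply_zero (t : ℂ) (v : ℂ²) : diagOneCLM t v 0 = v 0 := by
  change WithLp.ofLp (toEuclideanCLM (𝕜 := ℂ) _ v) 0 = _
  simp [ofLp_toEuclideanCLM, mulVec_diagonal]

@[simp] lemma diagOneCLM_apply_one (t : ℂ) (v : ℂ²) : diagOneCLM t v 1 = t * v 1 := by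
  change WithLp.ofLp (toEuclideanCLM (𝕜 := ℂ) _ v) 1 = _
  simp [ofLp_toEuclideanCLM, mulVec_diagonal]

lemma diagOneCLM_one : diagOneCLM 1 = 1 := by
  rw [diagOneCLM, show ![(1 : ℂ), 1] = fun _ => 1 by ext i; fin_cases i <;> rfl, diagonal_one,
    map_one]

lemma diagOneCLM_mul (a b : ℂ) : diagOneCLM a * diagOneCLM b = diagOneCLM (a * b) := by
  rw [diagOneCLM, diagOneCLM, diagOneCLM, ← map_mul, diagonal_mul_diagonal]
  congr; ext i; fin_cases i <;> simp

lemma diagOneCLM_comp_apply (a b : ℂ) (v : ℂ²) :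
    diagOneCLM a (diagOneCLM b v) = diagOneCLM (a * b) v := by
  rw [← diagOneCLM_mul, mul_apply_eq_comp]

lemma toEuclideanCLM_diagonal_eq_smul_diagOneCLM {a : ℂ} (ha : a ≠ 0) :
    toEuclideanCLM (𝕜 := ℂ) (diagonal ![a, a⁻¹]) = a • diagOneCLM (a⁻¹ ^ 2) := by
  rw [diagOneCLM, ← map_smul, ← diagonal_smul]
  congr; ext i; fin_cases i <;> simp; field_simp

lemma norm_diagOneCLM_apply_le {t : ℂ} {B : ℝ} (hB : 1 ≤ B) (ht : ‖t‖ ≤ B) (v : ℂ²) :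
    ‖diagOneCLM t v‖ ≤ B * ‖v‖ := by
  have h0 : 0 ≤ B := zero_le_one.trans hB
  rw [← sq_le_sq₀ (norm_nonneg _) (by positivity), mul_pow, EuclideanSpace.norm_sq_eq,
    EuclideanSpace.norm_sq_eq, Fin.sum_univ_two, Fin.sum_univ_two, diagOneCLM_apply_zero,
    diagOneCLM_apply_one, norm_mul]
  have : 1 ≤ B ^ 2 := by nlinarith
  have : ‖t‖ ^ 2 ≤ B ^ 2 := pow_le_pow_left₀ (norm_nonneg _) ht 2
  nlinarith [sq_nonneg ‖v 0‖, sq_nonneg ‖v 1‖, mul_pow ‖t‖ ‖v 1‖ 2]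

lemma diagOneCLM_apply_eq_add_smul (t : ℂ) (v : ℂ²) :
    diagOneCLM t v = diagOneCLM 0 v + t • EuclideanSpace.single 1 (v 1) := by
  ext i; fin_cases i <;> simp

lemma tendsto_diagOneCLM_apply {α : Type*} {F : Filter α} {t : α → ℂ} (ht : Tendsto t F (𝓝 0))
    (v : ℂ²) : Tendsto (fun a => diagOneCLM (t a) v) F (𝓝 (diagOneCLM 0 v)) := by
  rw [funext fun a => diagOneCLM_apply_eq_add_smul (t a) v]
  simpa using (ht.smul_const (EuclideanSpace.single 1 (v 1))).const_add (diagOneCLM 0 v)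

lemma eq_diagOneCLM_add_sum_of_recursion {μ : ℕ → ℂ} {y s : ℕ → ℂ²}
    (hy : ∀ n, y (n + 1) = diagOneCLM (μ (n + 1)) (y n) + s n) (n : ℕ) :
    y n = diagOneCLM (∏ i ∈ Ioc 0 n, μ i) (y 0) +
      ∑ k ∈ range n, diagOneCLM (∏ i ∈ Ioc (k + 1) n, μ i) (s k) := by
  induction n with
  | zero => simp [diagOneCLM_one]
  | succ n ih =>
    have hprod : ∀ k ≤ n, ∏ i ∈ Ioc k (n + 1), μ i = μ (n + 1) * ∏ i ∈ Ioc k n, μ i :=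
      fun k hk => by rw [prod_Ioc_succ_top hk, mul_comm]
    rw [hy, ih, map_add, map_sum, sum_range_succ, Ioc_self, prod_empty, diagOneCLM_one,
      hprod 0 n.zero_le, one_apply_eq_self, diagOneCLM_comp_apply, add_assoc]
    congr 2
    refine sum_congr rfl fun k hk => ?_
    rw [diagOneCLM_comp_apply, hprod (k + 1) (mem_range.mp hk)]

lemma le_mul_exp_of_le_add_sum {u a : ℕ → ℝ} {C : ℝ} (hC : 0 ≤ C) (ha : ∀ n, 0 ≤ a n)
    (hu : ∀ n, u n ≤ C + ∑ k ∈ range n, a k * u k) (n : ℕ) :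
    u n ≤ C * Real.exp (∑ k ∈ range n, a k) := by
  set U : ℕ → ℝ := fun n => C + ∑ k ∈ range n, a k * u k
  have hU : ∀ n, U (n + 1) ≤ (1 + a n) * U n + 0 := fun n => by
    have := mul_le_mul_of_nonneg_left (hu n) (ha n)
    simp only [U, sum_range_succ] at this ⊢
    linarith
  have := discrete_gronwall (u := U) (n₀ := 0) (by simpa [U] using hC) (fun n _ => hU n)
    (fun n _ => ha n) (fun _ _ => le_rfl) n.zero_le
  simpa [U, ← range_eq_Ico] using (hu n).trans this

lemma tendsto_sum_range_of_dominated_convergence {G : Type*} [NormedAddCommGroup G]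
    [CompleteSpace G] {f : ℕ → ℕ → G} {g : ℕ → G} {bound : ℕ → ℝ} (h_sum : Summable bound)
    (hab : ∀ k, Tendsto (f · k) atTop (𝓝 (g k))) (h_bound : ∀ n, ∀ k < n, ‖f n k‖ ≤ bound k) :
    Tendsto (fun n => ∑ k ∈ range n, f n k) atTop (𝓝 (∑' k, g k)) := by
  have h_sum_eq (n : ℕ) : ∑ k ∈ range n, f n k = ∑' k, if k < n then f n k else 0 := by
    rw [tsum_eq_sum (s := range n) fun k hk => if_neg (by simpa using hk)]
    exact sum_congr rfl fun k hk => (if_pos (mem_range.mp hk)).symm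
  simp_rw [h_sum_eq]
  refine tendsto_tsum_of_dominated_convergence h_sum (fun k => ?_) (.of_forall fun n k => ?_)
  · refine (hab k).congr' ?_
    filter_upwards [eventually_gt_atTop k] with n hn using (if_pos hn).symm
  · split_ifs with hk
    · exact h_bound n k hk
    · simpa using (norm_nonneg _).trans (h_bound (k + 1) k k.lt_succ_self)

section DiagOneRecursion

variable {μ : ℕ → ℂ} {S : ℕ → ℂ² →L[ℂ] ℂ²} {y : ℕ → ℂ²} {B : ℝ}

lemma one_le_of_norm_prod_Ioc_le (hB : ∀ k n, k ≤ n → ‖∏ i ∈ Ioc k n, μ i‖ ≤ B) : 1 ≤ B := by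
  simpa using hB 0 0 le_rfl

lemma norm_le_of_diagOne_recursion (hB : ∀ k n, k ≤ n → ‖∏ i ∈ Ioc k n, μ i‖ ≤ B)
    (hS : Summable fun k => ‖S (k + 1)‖)
    (hy : ∀ n, y (n + 1) = (diagOneCLM (μ (n + 1)) + S (n + 1)) (y n)) (n : ℕ) :
    ‖y n‖ ≤ B * ‖y 0‖ * Real.exp (∑' k, B * ‖S (k + 1)‖) := by
  have hB1 := one_le_of_norm_prod_Ioc_le hB
  have hvoc := eq_diagOneCLM_add_sum_of_recursion (s := fun k => S (k + 1) (y k)) hy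
  have hineq (n : ℕ) : ‖y n‖ ≤ B * ‖y 0‖ + ∑ k ∈ range n, B * ‖S (k + 1)‖ * ‖y k‖ := by
    rw [hvoc n]
    refine (norm_add_le _ _).trans (add_le_add (norm_diagOneCLM_apply_le hB1 (hB 0 n n.zero_le) _)
      ((norm_sum_le _ _).trans (sum_le_sum fun k hk => ?_)))
    calc _ ≤ B * ‖S (k + 1) (y k)‖ :=
          norm_diagOneCLM_apply_le hB1 (hB _ _ (mem_range.mp hk)) _
      _ ≤ B * (‖S (k + 1)‖ * ‖y k‖) := by gcongr; exact (S (k + 1)).le_opNorm _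
      _ = _ := by ring
  have hB0 : 0 ≤ B := zero_le_one.trans hB1
  refine (le_mul_exp_of_le_add_sum (by positivity) (fun k => by positivity) hineq n).trans ?_
  gcongr
  exact hS.mul_left B |>.sum_le_tsum _ (fun k _ => by positivity)

theorem summable_and_tendsto_of_diagOne_recursion
    (hB : ∀ k n, k ≤ n → ‖∏ i ∈ Ioc k n, μ i‖ ≤ B)
    (hdecay : ∀ k, Tendsto (fun n => ∏ i ∈ Ioc k n, μ i) atTop (𝓝 0))
    (hS : Summable fun k => ‖S (k + 1)‖)
    (hy : ∀ n, y (n + 1) = (diagOneCLM (μ (n + 1)) + S (n + 1)) (y n)) :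
    Summable (fun k => ‖S (k + 1) (y k)‖) ∧
      Tendsto y atTop (𝓝 (diagOneCLM 0 (y 0 + ∑' k, S (k + 1) (y k)))) := by
  set C := B * ‖y 0‖ * Real.exp (∑' k, B * ‖S (k + 1)‖)
  have hB1 := one_le_of_norm_prod_Ioc_le hB
  have hsummand (k : ℕ) : ‖S (k + 1) (y k)‖ ≤ C * ‖S (k + 1)‖ :=
    ((S (k + 1)).le_opNorm _).trans <| by
      rw [mul_comm C]; gcongr; exact norm_le_of_diagOne_recursion hB hS hy k
  have hsum : Summable (fun k => ‖S (k + 1) (y k)‖) :=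
    .of_nonneg_of_le (fun _ => norm_nonneg _) hsummand (hS.mul_left C)
  refine ⟨hsum, ?_⟩
  have hlim := (tendsto_diagOneCLM_apply (hdecay 0) (y 0)).add
    (tendsto_sum_range_of_dominated_convergence (hsum.mul_left B)
      (fun k => tendsto_diagOneCLM_apply (hdecay (k + 1)) _)
      fun n k hk => norm_diagOneCLM_apply_le hB1 (hB _ _ hk) _)
  rw [map_add, (diagOneCLM 0).map_tsum hsum.of_norm]
  exact hlim.congr fun n => (eq_diagOneCLM_add_sum_of_recursion hy n).symm

end DiagOneRecursion

section HyperbolicSystem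

variable {l : ℕ → ℂ}

lemma norm_prod_Ioc_inv_sq_le {M : ℝ} (hM : 0 < M)
    (hprod : ∀ m n : ℕ, n ≤ m → (1 : ℝ) / M ≤ ∏ i ∈ Icc (n + 1) m, ‖l i‖) (k n : ℕ)
    (hkn : k ≤ n) : ‖∏ i ∈ Ioc k n, (l i)⁻¹ ^ 2‖ ≤ M ^ 2 := by
  have h := hprod n k hkn
  rw [Icc_add_one_left_eq_Ioc] at h
  rw [prod_pow, prod_inv_distrib, norm_pow, norm_inv, norm_prod]
  gcongr
  rw [inv_le_comm₀ ((one_div_pos.mpr hM).trans_le h) hM]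
  simpa using h

lemma tendsto_prod_Ioc_inv_sq (hl : ∀ n, l n ≠ 0)
    (hinf : Tendsto (fun n : ℕ => ‖∏ i ∈ Icc 1 n, l i‖) atTop atTop) (k : ℕ) :
    Tendsto (fun n => ∏ i ∈ Ioc k n, (l i)⁻¹ ^ 2) atTop (𝓝 0) := by
  have hk : 0 < ‖∏ i ∈ Ioc 0 k, l i‖ := norm_pos_iff.mpr (prod_ne_zero_iff.mpr fun i _ => hl i)
  have hsplit : ∀ᶠ n in atTop,
      ‖∏ i ∈ Icc 1 n, l i‖ / ‖∏ i ∈ Ioc 0 k, l i‖ = ‖∏ i ∈ Ioc k n, l i‖ := by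
    filter_upwards [eventually_ge_atTop k] with n hn
    rw [show Icc 1 n = Ioc 0 n from Icc_add_one_left_eq_Ioc 0 n,
      ← prod_Ioc_consecutive _ k.zero_le hn, norm_mul, mul_div_cancel_left₀ _ hk.ne']
  have hnorm := (hinf.atTop_div_const hk).congr' hsplit
  simp_rw [prod_pow, prod_inv_distrib]
  simpa using (tendsto_inv₀_cobounded.comp (tendsto_norm_atTop_iff_cobounded.mp hnorm)).pow 2

variable {R : ℕ → ℂ² →L[ℂ] ℂ²} {x : ℕ → ℂ²}

lemma inv_prod_smul_apply_eq (k : ℕ) :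
    (∏ i ∈ Icc 1 (k + 1), l i)⁻¹ • R (k + 1) (x (k + 1)) =
      ((l (k + 1))⁻¹ • R (k + 1)) ((∏ i ∈ Icc 1 k, l i)⁻¹ • x (k + 1)) := by
  simp [prod_Icc_succ_top (show 1 ≤ k + 1 by omega), smul_smul, mul_comm]

lemma inv_prod_smul_recursion (hl : ∀ n, l n ≠ 0)
    (hx : ∀ n, 1 ≤ n →
      x (n + 1) = (toEuclideanCLM (𝕜 := ℂ) (diagonal ![l n, (l n)⁻¹]) + R n) (x n)) (n : ℕ) :
    (∏ i ∈ Icc 1 (n + 1), l i)⁻¹ • x (n + 1 + 1) =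
      (diagOneCLM ((l (n + 1))⁻¹ ^ 2) + (l (n + 1))⁻¹ • R (n + 1))
        ((∏ i ∈ Icc 1 n, l i)⁻¹ • x (n + 1)) := by
  rw [hx (n + 1) (by omega), toEuclideanCLM_diagonal_eq_smul_diagOneCLM (hl _),
    prod_Icc_succ_top (show 1 ≤ n + 1 by omega)]
  simp only [_root_.add_apply, _root_.smul_apply, map_smul, smul_add, smul_smul]
  congr 2 <;> field_simp [hl (n + 1)]

end HyperbolicSystem

theorem asymptotics_hyperbolic_case
    (l : ℕ → ℂ) (hl : ∀ n, l n ≠ 0)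
    (R : ℕ → EuclideanSpace ℂ (Fin 2) →L[ℂ] EuclideanSpace ℂ (Fin 2))
    (hS : Summable fun k : ℕ => ‖R (k + 1)‖ / ‖l (k + 1)‖)
    (M : ℝ) (hM : 0 < M)
    (hprod : ∀ m n : ℕ, n ≤ m → (1 : ℝ) / M ≤ ∏ i ∈ Finset.Icc (n + 1) m, ‖l i‖)
    (hinf : Tendsto (fun n : ℕ => ‖∏ i ∈ Finset.Icc 1 n, l i‖) atTop atTop)
    (x : ℕ → EuclideanSpace ℂ (Fin 2))
    (hx : ∀ n, 1 ≤ n →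
      x (n + 1) =
        (Matrix.toEuclideanCLM (𝕜 := ℂ) (Matrix.diagonal ![l n, (l n)⁻¹]) + R n) (x n)) :
    let P : EuclideanSpace ℂ (Fin 2) →L[ℂ] EuclideanSpace ℂ (Fin 2) :=
      Matrix.toEuclideanCLM (𝕜 := ℂ) (Matrix.diagonal ![1, 0])
    (Summable fun k : ℕ => ‖(∏ i ∈ Finset.Icc 1 (k + 1), l i)⁻¹ • (R (k + 1)) (x (k + 1))‖) ∧
      Tendsto (fun n : ℕ => (∏ i ∈ Finset.Icc 1 (n - 1), l i)⁻¹ • x n) atTop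
        (nhds (P (x 1 +
          ∑' k : ℕ, (∏ i ∈ Finset.Icc 1 (k + 1), l i)⁻¹ • (R (k + 1)) (x (k + 1))))) := by
  intro P
  obtain ⟨hsum, hlim⟩ := summable_and_tendsto_of_diagOne_recursion
    (μ := fun i => (l i)⁻¹ ^ 2) (S := fun i => (l i)⁻¹ • R i)
    (y := fun n => (∏ i ∈ Icc 1 n, l i)⁻¹ • x (n + 1))
    (norm_prod_Ioc_inv_sq_le hM hprod) (tendsto_prod_Ioc_inv_sq hl hinf)
    (by simpa [norm_smul, div_eq_inv_mul] using hS) (inv_prod_smul_recursion hl hx)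
  simp only [inv_prod_smul_apply_eq]
  refine ⟨hsum, ?_⟩
  rw [show (∏ i ∈ Icc 1 0, l i)⁻¹ • x (0 + 1) = x 1 by simp] at hlim
  refine (hlim.comp (tendsto_sub_atTop_nat 1)).congr' ?_
  filter_upwards [eventually_ge_atTop 1] with n hn
  simp [Nat.sub_add_cancel hn]
end

section
/- Let μ₂(z) := c²z²(1+z²)e^{2iω} / (4(1−z²)(z²−e^{2iω})(1−z²e^{2iω})) with c, ω real. Then for every z on the unit circle with z ∉ {1, −1, e^{±iω}, −e^{±iω}, e^{±2iω}, −e^{±2iω}}, the value μ₂(z) is purely imaginary, i.e. Re μ₂(z) = 0. -/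
/-!
Write `q = z²` and `E = e^{2iω}`, so that `μ₂(z) = c²/4 · q(1+q)E / ((1-q)(q-E)(1-qE))`.
Both `q` and `E` lie on the unit circle, where conjugation is inversion, and the substitution
`q ↦ q⁻¹, E ↦ E⁻¹` multiplies the numerator by `(q³E²)⁻¹` and the denominator by `-(q³E²)⁻¹`.
Hence `conj μ₂ = -μ₂`.
-/

open Complex ComplexConjugate

lemma Complex.re_eq_zero_of_conj_eq_neg {w : ℂ} (h : conj w = -w) : w.re = 0 := by
  have hre := congrArg re h
  rw [conj_re, neg_re] at hre
  linarith

noncomputable def mu2Core (q E : ℂ) : ℂ := q * (1 + q) * E / ((1 - q) * (q - E) * (1 - q * E))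

lemma mu2Core_inv_inv {q E : ℂ} (hq : q ≠ 0) (hE : E ≠ 0) :
    mu2Core q⁻¹ E⁻¹ = -mu2Core q E := by
  have hk : q ^ 3 * E ^ 2 ≠ 0 := by positivity
  have hnum : q⁻¹ * (1 + q⁻¹) * E⁻¹ = q * (1 + q) * E / (q ^ 3 * E ^ 2) := by
    field_simp
    ring
  have hden : (1 - q⁻¹) * (q⁻¹ - E⁻¹) * (1 - q⁻¹ * E⁻¹) =
      -((1 - q) * (q - E) * (1 - q * E)) / (q ^ 3 * E ^ 2) := by
    field_simp
    ring
  rw [mu2Core, mu2Core, hnum, hden, div_div_div_cancel_right₀ hk, div_neg]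

lemma conj_mu2Core {q E : ℂ} (hq : ‖q‖ = 1) (hE : ‖E‖ = 1) :
    conj (mu2Core q E) = -mu2Core q E := by
  have hq0 : q ≠ 0 := norm_ne_zero_iff.mp (by simp [hq])
  have hE0 : E ≠ 0 := norm_ne_zero_iff.mp (by simp [hE])
  rw [← mu2Core_inv_inv hq0 hE0, inv_eq_conj hq, inv_eq_conj hE, mu2Core, mu2Core]
  simp only [map_div₀, map_mul, map_sub, map_add, map_one]

theorem mu2_purely_imaginary_on_circle_general (c ω : ℝ) (z : ℂ) (hz : ‖z‖ = 1) :
    ((c : ℂ) ^ 2 * z ^ 2 * (1 + z ^ 2) * Complex.exp (2 * ω * I) /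
      (4 * (1 - z ^ 2) * (z ^ 2 - Complex.exp (2 * ω * I)) *
        (1 - z ^ 2 * Complex.exp (2 * ω * I)))).re = 0 := by
  have hE : ‖Complex.exp (2 * ω * I)‖ = 1 := by
    exact_mod_cast norm_exp_ofReal_mul_I (2 * ω)
  have hform : (c : ℂ) ^ 2 * z ^ 2 * (1 + z ^ 2) * Complex.exp (2 * ω * I) /
      (4 * (1 - z ^ 2) * (z ^ 2 - Complex.exp (2 * ω * I)) *
        (1 - z ^ 2 * Complex.exp (2 * ω * I))) =
      ((c ^ 2 / 4 : ℝ) : ℂ) * mu2Core (z ^ 2) (Complex.exp (2 * ω * I)) := by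
    simp only [mu2Core, div_eq_mul_inv, mul_inv]
    push_cast
    ring
  have hq : ‖z ^ 2‖ = 1 := by rw [norm_pow, hz, one_pow]
  have hcore := Complex.re_eq_zero_of_conj_eq_neg (conj_mu2Core hq hE)
  rw [hform, re_ofReal_mul, hcore, mul_zero]

theorem mu2_purely_imaginary_on_circle (c ω : ℝ) (z : ℂ) (hz : ‖z‖ = 1)
    (h1 : z ≠ 1) (h2 : z ≠ -1)
    (h3 : z ≠ Complex.exp (ω * I)) (h4 : z ≠ Complex.exp (-ω * I))
    (h5 : z ≠ -Complex.exp (ω * I)) (h6 : z ≠ -Complex.exp (-ω * I))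
    (h7 : z ≠ Complex.exp (2 * ω * I)) (h8 : z ≠ Complex.exp (-(2 * ω) * I))
    (h9 : z ≠ -Complex.exp (2 * ω * I)) (h10 : z ≠ -Complex.exp (-(2 * ω) * I)) :
    ((c : ℂ) ^ 2 * z ^ 2 * (1 + z ^ 2) * Complex.exp (2 * ω * I) /
      (4 * (1 - z ^ 2) * (z ^ 2 - Complex.exp (2 * ω * I)) *
        (1 - z ^ 2 * Complex.exp (2 * ω * I)))).re = 0 :=
  mu2_purely_imaginary_on_circle_general c ω z hz
end

section
/- Rigidity of oscillating asymptotics: let z ∈ ℂ with |z| = 1 and z² ≠ 1, let 0 < γ < 1/2, let μ ∈ ℂ be purely imaginary, and let A, B ∈ ℂ. If A·z^{-n}·exp(μ·n^{1-2γ}) + B·z^{n}·exp(−μ·n^{1-2γ}) → 0 as n → ∞, then A = B = 0. -/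
open Filter Topology

/-!
Multiplying the sequence by the unimodular factor `z ^ n * exp (-μ n ^ (1 - 2γ))` turns the
hypothesis into `A + t n → 0` with `t n = B * (z ^ 2) ^ n * exp (-2μ n ^ (1 - 2γ))`. Consecutive
terms satisfy `t (n + 1) = t n * r n`, where `r n → z ^ 2` because the increments of
`n ^ (1 - 2γ)` tend to `0`. Passing to the limit gives `-A = -A * z ^ 2`, so `A = 0` as
`z ^ 2 ≠ 1`; then `‖B‖ = ‖t n‖ → 0`.
-/

theorem eq_zero_of_tendsto_of_succ_eq_mul {M : Type*} [MulZeroOneClass M]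
    [IsLeftCancelMulZero M] [TopologicalSpace M] [ContinuousMul M] [T2Space M]
    {t r : ℕ → M} {L w : M}
    (ht : Tendsto t atTop (𝓝 L)) (hr : Tendsto r atTop (𝓝 w)) (hw : w ≠ 1)
    (hrec : ∀ n, t (n + 1) = t n * r n) : L = 0 := by
  have hshift : Tendsto (fun n => t n * r n) atTop (𝓝 L) :=
    (ht.comp (tendsto_add_atTop_nat 1)).congr hrec
  by_contra hL
  exact hw ((mul_eq_left₀ hL).mp (tendsto_nhds_unique (ht.mul hr) hshift))

theorem tendsto_natCast_add_one_rpow_sub_rpow {p : ℝ} (hp0 : 0 ≤ p) (hp1 : p < 1) :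
    Tendsto (fun n : ℕ => ((n : ℝ) + 1) ^ p - (n : ℝ) ^ p) atTop (𝓝 0) := by
  have hbound : Tendsto (fun n : ℕ => p * (n : ℝ) ^ (p - 1)) atTop (𝓝 0) := by
    have := ((tendsto_rpow_neg_atTop (by linarith : 0 < 1 - p)).comp
      tendsto_natCast_atTop_atTop).const_mul p
    simpa [Function.comp_def] using this
  refine tendsto_of_tendsto_of_tendsto_of_le_of_le' tendsto_const_nhds hbound ?_ ?_
  · filter_upwards with n
    have := Real.rpow_le_rpow (Nat.cast_nonneg n) (le_add_of_nonneg_right zero_le_one) hp0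
    linarith
  · filter_upwards [eventually_gt_atTop 0] with n hn
    have hn : (0 : ℝ) < n := Nat.cast_pos.mpr hn
    have hbernoulli : (1 + 1 / (n : ℝ)) ^ p ≤ 1 + p * (1 / n) :=
      rpow_one_add_le_one_add_mul_self (by linarith [one_div_pos.mpr hn]) hp0 hp1.le
    calc ((n : ℝ) + 1) ^ p - (n : ℝ) ^ p
        = (n : ℝ) ^ p * (1 + 1 / (n : ℝ)) ^ p - (n : ℝ) ^ p := by
          rw [← Real.mul_rpow hn.le (by positivity), mul_add, mul_one_div_cancel hn.ne', mul_one]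
      _ ≤ (n : ℝ) ^ p * (1 + p * (1 / n)) - (n : ℝ) ^ p := by gcongr
      _ = p * (n : ℝ) ^ (p - 1) := by
          rw [Real.rpow_sub hn, Real.rpow_one]
          ring

theorem eq_zero_of_tendsto_mul_pow_mul_exp {B w c L : ℂ} {a : ℕ → ℝ} (hw : w ≠ 1)
    (ha : Tendsto (fun n => a (n + 1) - a n) atTop (𝓝 0))
    (h : Tendsto (fun n => B * w ^ n * Complex.exp (c * a n)) atTop (𝓝 L)) : L = 0 := by
  refine eq_zero_of_tendsto_of_succ_eq_mul h
    (r := fun n => w * Complex.exp (c * ↑(a (n + 1) - a n))) ?_ hw fun n => ?_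
  · have hexp : Tendsto (fun n => Complex.exp (c * ↑(a (n + 1) - a n))) atTop (𝓝 1) := by
      simpa using ((Complex.continuous_ofReal.tendsto 0).comp ha).const_mul c |>.cexp
    simpa using hexp.const_mul w
  · rw [pow_succ, Complex.ofReal_sub, mul_sub, Complex.exp_sub]
    field_simp

theorem Complex.norm_exp_mul_ofReal_of_re_eq_zero {μ : ℂ} (hμ : μ.re = 0) (x : ℝ) :
    ‖Complex.exp (μ * x)‖ = 1 := by
  simp [Complex.norm_exp, hμ]

theorem oscillating_asymptotics_rigidity (z : ℂ) (hz : ‖z‖ = 1)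
    (hz2 : z ^ 2 ≠ 1) (γ : ℝ) (hγ0 : 0 < γ) (hγ : γ < 1 / 2)
    (μ : ℂ) (hμ : μ.re = 0) (A B : ℂ)
    (h : Tendsto (fun n : ℕ =>
        A * z ^ (-(n : ℤ)) * Complex.exp (μ * ((n : ℝ) ^ (1 - 2 * γ) : ℝ)) +
          B * z ^ (n : ℕ) * Complex.exp (-μ * ((n : ℝ) ^ (1 - 2 * γ) : ℝ)))
      atTop (nhds 0)) :
    A = 0 ∧ B = 0 := by
  set a : ℕ → ℝ := fun n => (n : ℝ) ^ (1 - 2 * γ)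
  have hz0 : z ≠ 0 := ne_zero_of_norm_ne_zero (hz ▸ one_ne_zero)
  have hunit : ∀ n : ℕ, ‖z ^ n * Complex.exp (-μ * a n)‖ = 1 := fun n => by
    rw [norm_mul, norm_pow, hz, one_pow, one_mul,
      Complex.norm_exp_mul_ofReal_of_re_eq_zero (by simp [hμ])]
  have hfactor : ∀ n : ℕ,
      (A * z ^ (-(n : ℤ)) * Complex.exp (μ * a n) + B * z ^ n * Complex.exp (-μ * a n)) *
        (z ^ n * Complex.exp (-μ * a n)) =
        A + B * (z ^ 2) ^ n * Complex.exp (-(2 * μ) * a n) := by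
    intro n
    have hexp : -(2 * μ) * a n = -μ * a n + -μ * a n := by ring
    rw [zpow_neg, zpow_natCast, hexp, Complex.exp_add, neg_mul, Complex.exp_neg, ← pow_mul,
      mul_comm 2, pow_mul]
    field_simp
  have hsum : Tendsto (fun n => A + B * (z ^ 2) ^ n * Complex.exp (-(2 * μ) * a n))
      atTop (𝓝 0) := by
    replace h : Tendsto (fun n : ℕ => A * z ^ (-(n : ℤ)) * Complex.exp (μ * a n) +
        B * z ^ n * Complex.exp (-μ * a n)) atTop (𝓝 0) := h
    rw [tendsto_zero_iff_norm_tendsto_zero] at h ⊢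
    simpa only [← hfactor, norm_mul _ (_ * _), hunit, mul_one] using h
  have hincr : Tendsto (fun n => a (n + 1) - a n) atTop (𝓝 0) := by
    simpa only [a, Nat.cast_add_one] using
      tendsto_natCast_add_one_rpow_sub_rpow (by linarith) (by linarith)
  have hA : -A = 0 := eq_zero_of_tendsto_mul_pow_mul_exp hz2 hincr
    (by simpa only [neg_add_cancel_left, add_zero] using hsum.const_add (-A))
  have hA0 : A = 0 := neg_eq_zero.mp hA
  refine ⟨hA0, norm_eq_zero.mp (tendsto_const_nhds_iff (l := atTop (α := ℕ)).mp ?_)⟩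
  simpa only [hA0, zero_add, norm_zero, norm_mul, norm_pow, hz, one_pow, mul_one,
    Complex.norm_exp_mul_ofReal_of_re_eq_zero (by simp [hμ] : (-(2 * μ)).re = 0)] using hsum.norm
end

section
/- Let z ∈ ℂ with |z| = 1, z² ≠ 1, let 0 < γ < 1/2 and μ ∈ ℂ with Re μ = 0. If there exist Φ, Ψ ∈ ℂ such that the real sequence p_n satisfies p_n = Φ·z^{-n}·exp(μ n^{1-2γ}/(1-2γ)) + Ψ·z^{n}·exp(−μ n^{1-2γ}/(1-2γ)) + o(1) as n → ∞, then Ψ equals the complex conjugate of Φ. -/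
/-!
Put `a n = n ^ (1 - 2γ) / (1 - 2γ)` and `u n = z ^ n * exp (-μ a n)`. Both `z` and `exp (-μ a n)` are
unimodular, so `z ^ (-n) * exp (μ a n) = conj (u n)` and the hypothesis reads `p n ≈ Φ ū n + Ψ u n`.
Since `p n` is real, subtracting the conjugate gives `A u n - conj (A u n) → 0` for `A = Ψ - conj Φ`,
and multiplying by `u n` gives `A (u n)² → conj A`. As `a` grows sublinearly, `u (n + 1) / u n → z`,
so also `A (u (n + 1))² → conj A * z²`; hence `conj A = conj A * z²`, and `z² ≠ 1` forces `A = 0`.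
-/

open Filter Topology ComplexConjugate

theorem abs_rpow_add_one_sub_rpow_le {β x : ℝ} (hβ : β ≤ 1) (hx : 0 < x) :
    |(x + 1) ^ β - x ^ β| ≤ |β| * x ^ (β - 1) := by
  obtain ⟨c, ⟨hxc, -⟩, hc⟩ := exists_hasDerivAt_eq_slope (fun t => t ^ β)
    (fun t => β * t ^ (β - 1)) (lt_add_one x)
    (fun t ht => (Real.continuousAt_rpow_const t β (.inl (hx.trans_le ht.1).ne')).continuousWithinAt)
    (fun t ht => Real.hasDerivAt_rpow_const (.inl (hx.trans ht.1).ne'))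
  rw [add_sub_cancel_left, div_one] at hc
  rw [← hc, abs_mul, abs_of_pos (Real.rpow_pos_of_pos (hx.trans hxc) _)]
  exact mul_le_mul_of_nonneg_left (Real.rpow_le_rpow_of_nonpos hx hxc.le (by linarith))
    (abs_nonneg β)

theorem tendsto_rpow_add_one_sub_rpow {β : ℝ} (hβ : β < 1) :
    Tendsto (fun x : ℝ => (x + 1) ^ β - x ^ β) atTop (𝓝 0) := by
  have hbound : Tendsto (fun x : ℝ => |β| * x ^ (β - 1)) atTop (𝓝 0) := by
    simpa using (tendsto_rpow_neg_atTop (sub_pos.mpr hβ)).const_mul |β|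
  refine squeeze_zero_norm' ?_ hbound
  filter_upwards [eventually_gt_atTop 0] with x hx
  exact abs_rpow_add_one_sub_rpow_le hβ.le hx

theorem eq_zero_of_tendsto_mul_sub_conj {u : ℕ → ℂ} {ζ A : ℂ} (hu : ∀ n, ‖u n‖ = 1)
    (hratio : Tendsto (fun n => u (n + 1) / u n) atTop (𝓝 ζ)) (hζ : ζ ^ 2 ≠ 1)
    (h : Tendsto (fun n => A * u n - conj (A * u n)) atTop (𝓝 0)) : A = 0 := by
  have hu0 : ∀ n, u n ≠ 0 := fun n => norm_ne_zero_iff.mp (by simp [hu])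
  have hsq : Tendsto (fun n => A * u n ^ 2) atTop (𝓝 (conj A)) := by
    have hmul : Tendsto (fun n => u n * (A * u n - conj (A * u n))) atTop (𝓝 0) := by
      rw [tendsto_zero_iff_norm_tendsto_zero] at h ⊢
      simpa only [norm_mul, hu, one_mul] using h
    refine tendsto_sub_nhds_zero_iff.mp (hmul.congr fun n => ?_)
    have hunit : u n * conj (u n) = 1 := by simp [Complex.mul_conj', hu]
    rw [map_mul]
    linear_combination (-conj A) * hunit
  have hshift : Tendsto (fun n => A * u (n + 1) ^ 2) atTop (𝓝 (conj A * ζ ^ 2)) := by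
    refine (hsq.mul (hratio.pow 2)).congr fun n => ?_
    field_simp [hu0 n]
  have hfix : conj A * ζ ^ 2 = conj A :=
    tendsto_nhds_unique hshift (hsq.comp (tendsto_add_atTop_nat 1))
  have hconjA : conj A = 0 := by
    have : conj A * (ζ ^ 2 - 1) = 0 := by linear_combination hfix
    exact (mul_eq_zero.mp this).resolve_right (sub_ne_zero.mpr hζ)
  simpa using hconjA

theorem eq_conj_of_tendsto_ofReal_sub {u : ℕ → ℂ} {ζ : ℂ} (hu : ∀ n, ‖u n‖ = 1)
    (hratio : Tendsto (fun n => u (n + 1) / u n) atTop (𝓝 ζ)) (hζ : ζ ^ 2 ≠ 1)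
    {p : ℕ → ℝ} {Φ Ψ : ℂ}
    (h : Tendsto (fun n => (p n : ℂ) - (Φ * conj (u n) + Ψ * u n)) atTop (𝓝 0)) :
    Ψ = conj Φ := by
  rw [← sub_eq_zero]
  refine eq_zero_of_tendsto_mul_sub_conj hu hratio hζ ?_
  have hconj := (Complex.continuous_conj.tendsto' 0 0 (map_zero _)).comp h
  refine (sub_zero (0 : ℂ) ▸ hconj.sub h).congr fun n => ?_
  simp only [Function.comp_apply, map_sub, map_add, map_mul, Complex.conj_ofReal,
    Complex.conj_conj]
  ring

theorem tilde_phi_eq_conj_phi_general (z : ℂ) (hz : ‖z‖ = 1) (hz2 : z ^ 2 ≠ 1)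
    (γ : ℝ) (hγ0 : 0 < γ)
    (μ : ℂ) (hμ : μ.re = 0) (p : ℕ → ℝ) (Φ Ψ : ℂ)
    (h : Tendsto (fun n : ℕ =>
        (p n : ℂ) -
          (Φ * z ^ (-(n : ℤ)) * Complex.exp (μ * ((n : ℝ) ^ (1 - 2 * γ) / (1 - 2 * γ) : ℝ)) +
            Ψ * z ^ (n : ℕ) * Complex.exp (-μ * ((n : ℝ) ^ (1 - 2 * γ) / (1 - 2 * γ) : ℝ))))
      atTop (nhds 0)) :
    Ψ = starRingEnd ℂ Φ := by
  set a : ℕ → ℝ := fun n => (n : ℝ) ^ (1 - 2 * γ) / (1 - 2 * γ)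
  set u : ℕ → ℂ := fun n => z ^ n * Complex.exp (-μ * a n)
  have hu : ∀ n, ‖u n‖ = 1 := fun n => by simp [u, hz, Complex.norm_exp, hμ]
  have hgap : Tendsto (fun n => a (n + 1) - a n) atTop (𝓝 0) := by
    have := ((tendsto_rpow_add_one_sub_rpow (by linarith : 1 - 2 * γ < 1)).comp
      tendsto_natCast_atTop_atTop).div_const (1 - 2 * γ)
    simpa [a, sub_div] using this
  have hratio : Tendsto (fun n => u (n + 1) / u n) atTop (𝓝 z) := by
    have := (((Complex.continuous_ofReal.tendsto 0).comp hgap).const_mul (-μ)).cexp.const_mul z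
    rw [Complex.ofReal_zero, mul_zero, Complex.exp_zero, mul_one] at this
    refine this.congr fun n => ?_
    have hexp : Complex.exp (-μ * ↑(a (n + 1) - a n)) =
        Complex.exp (-μ * a (n + 1)) / Complex.exp (-μ * a n) := by
      rw [← Complex.exp_sub]; push_cast; ring_nf
    have hz0 : z ≠ 0 := norm_ne_zero_iff.mp (by simp [hz])
    simp only [u, Function.comp_apply, hexp, pow_succ]
    field_simp
  have hconjμ : conj μ = -μ := Complex.ext (by simp [hμ]) (by simp)
  refine eq_conj_of_tendsto_ofReal_sub (p := p) hu hratio hz2 (h.congr fun n => ?_)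
  simp only [u, a, map_mul, map_pow, ← Complex.exp_conj, map_neg, Complex.conj_ofReal, hconjμ,
    neg_neg, ← Complex.inv_eq_conj hz, zpow_neg, zpow_natCast, inv_pow]
  ring

theorem tilde_phi_eq_conj_phi (z : ℂ) (hz : ‖z‖ = 1) (hz2 : z ^ 2 ≠ 1)
    (γ : ℝ) (hγ0 : 0 < γ) (hγ : γ < 1 / 2)
    (μ : ℂ) (hμ : μ.re = 0) (p : ℕ → ℝ) (Φ Ψ : ℂ)
    (h : Tendsto (fun n : ℕ =>
        (p n : ℂ) -
          (Φ * z ^ (-(n : ℤ)) * Complex.exp (μ * ((n : ℝ) ^ (1 - 2 * γ) / (1 - 2 * γ) : ℝ)) +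
            Ψ * z ^ (n : ℕ) * Complex.exp (-μ * ((n : ℝ) ^ (1 - 2 * γ) / (1 - 2 * γ) : ℝ))))
      atTop (nhds 0)) :
    Ψ = starRingEnd ℂ Φ :=
  tilde_phi_eq_conj_phi_general z hz hz2 γ hγ0 μ hμ p Φ Ψ h
end

section
/- Lower bound on partial products: let z ∈ ℂ with 0 < |z| ≤ 1, let 0 < γ < 1/2, and let c₁ ≥ 0 satisfy |Re μ| ≤ c₁·(1 − |z|) for a fixed μ ∈ ℂ. Define c₂ := sup_{x ≥ 0} ((c₁/(1-2γ))·x^{1-2γ} − x), which is finite. Then for all m ≥ n ≥ 1, |z|^{-(m-n)}·exp((Re μ/(1-2γ))·((m+1)^{1-2γ} − (n+1)^{1-2γ})) ≥ exp(−c₂). -/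
/-!
Write `α = 1 - 2γ`, `r = ‖z‖` and `k = m - n`. Since `r ≤ exp (r - 1)`, the factor `r⁻ᵏ` is at least
`exp (k (1 - r))`. By subadditivity of `x ↦ x ^ α`, `0 ≤ (m+1)^α - (n+1)^α ≤ k^α`, so the second
exponent is at least `-(c₁/α) (1 - r) k^α ≥ -(c₁/α) ((1 - r) k)^α`. The total exponent is therefore
at least `-(c₁/α · x^α - x)` at `x = (1 - r) k`, which is `≥ -c₂`.
-/

namespace Real

lemma mul_rpow_sub_self_le {a α x : ℝ} (ha : 0 ≤ a) (hα0 : 0 ≤ α) (hα1 : α < 1) (hx : 0 ≤ x) :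
    a * x ^ α - x ≤ a * (a ^ (1 - α)⁻¹) ^ α := by
  set X := a ^ (1 - α)⁻¹
  have hX : 0 ≤ X := rpow_nonneg ha _
  rcases le_or_gt x X with hxX | hXx
  · have : a * x ^ α ≤ a * X ^ α := by gcongr
    linarith
  · -- beyond `X`, where `X ^ (1 - α) = a`, the linear term dominates
    have hXa : X ^ (1 - α) = a := by
      rw [← rpow_mul ha, inv_mul_cancel₀ (by linarith), rpow_one]
    have hx0 : 0 < x := hX.trans_lt hXx
    have hax : a * x ^ α ≤ x :=
      calc a * x ^ α ≤ x ^ (1 - α) * x ^ α := by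
            gcongr; rw [← hXa]; exact rpow_le_rpow hX hXx.le (by linarith)
        _ = x := by rw [← rpow_add hx0]; norm_num
    have : 0 ≤ a * X ^ α := by positivity
    linarith

lemma bddAbove_mul_rpow_sub_self {a α : ℝ} (ha : 0 ≤ a) (hα0 : 0 ≤ α) (hα1 : α < 1) :
    BddAbove ((fun x : ℝ => a * x ^ α - x) '' Set.Ici 0) := by
  refine ⟨a * (a ^ (1 - α)⁻¹) ^ α, ?_⟩
  rintro _ ⟨x, hx, rfl⟩
  exact mul_rpow_sub_self_le ha hα0 hα1 hx

lemma exp_mul_one_sub_le_inv_pow {r : ℝ} (hr : 0 < r) (k : ℕ) :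
    exp (k * (1 - r)) ≤ (r ^ k)⁻¹ := by
  rw [le_inv_comm₀ (exp_pos _) (pow_pos hr k), ← exp_neg, neg_mul_eq_mul_neg, neg_sub,
    exp_nat_mul]
  exact pow_le_pow_left₀ hr.le (by linarith [add_one_le_exp (r - 1)]) k

lemma mul_rpow_le_rpow_mul {t x α : ℝ} (ht0 : 0 ≤ t) (ht1 : t ≤ 1) (hx : 0 ≤ x) (hα : α ≤ 1) :
    t * x ^ α ≤ (t * x) ^ α := by
  rw [mul_rpow ht0 hx]
  gcongr
  exact self_le_rpow_of_le_one ht0 ht1 hα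

lemma rpow_sub_rpow_le_rpow_sub {x y p : ℝ} (hy : 0 ≤ y) (hyx : y ≤ x) (hp0 : 0 ≤ p)
    (hp1 : p ≤ 1) : x ^ p - y ^ p ≤ (x - y) ^ p := by
  have := rpow_add_le_add_rpow (sub_nonneg.mpr hyx) hy hp0 hp1
  rw [sub_add_cancel] at this
  linarith

end Real

open Real in
theorem lower_bound_partial_products (z : ℂ) (hz0 : 0 < ‖z‖)
    (hz1 : ‖z‖ ≤ 1) (γ : ℝ) (hγ0 : 0 < γ) (hγ : γ < 1 / 2)
    (μ : ℂ) (c₁ : ℝ) (hc₁ : 0 ≤ c₁) (hre : |μ.re| ≤ c₁ * (1 - ‖z‖)) :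
    BddAbove ((fun x : ℝ => c₁ / (1 - 2 * γ) * x ^ (1 - 2 * γ) - x) '' Set.Ici 0) ∧
      ∀ m n : ℕ, 1 ≤ n → n ≤ m →
        Real.exp (-sSup ((fun x : ℝ => c₁ / (1 - 2 * γ) * x ^ (1 - 2 * γ) - x) '' Set.Ici 0)) ≤
          (‖z‖ ^ (m - n))⁻¹ *
            Real.exp ((μ.re / (1 - 2 * γ)) *
              (((m : ℝ) + 1) ^ (1 - 2 * γ) - ((n : ℝ) + 1) ^ (1 - 2 * γ))) := by
  set α := 1 - 2 * γ
  have hα0 : 0 < α := by linarith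
  have hα1 : α < 1 := by linarith
  have ha : 0 ≤ c₁ / α := div_nonneg hc₁ hα0.le
  have hbdd := bddAbove_mul_rpow_sub_self ha hα0.le hα1
  refine ⟨hbdd, fun m n _ hnm => ?_⟩
  set t := 1 - ‖z‖
  set D := ((m : ℝ) + 1) ^ α - ((n : ℝ) + 1) ^ α
  have ht0 : 0 ≤ t := by linarith
  have hk : ((m - n : ℕ) : ℝ) = ((m : ℝ) + 1) - ((n : ℝ) + 1) := by push_cast [hnm]; ring
  have hmn : (n : ℝ) + 1 ≤ (m : ℝ) + 1 := by simpa using hnm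
  have hD0 : 0 ≤ D := sub_nonneg.mpr (rpow_le_rpow (by positivity) hmn hα0.le)
  have hDk : D ≤ ((m - n : ℕ) : ℝ) ^ α :=
    hk ▸ rpow_sub_rpow_le_rpow_sub (by positivity) hmn hα0.le hα1.le
  have hμ : -(c₁ / α * t) ≤ μ.re / α := by
    rw [div_mul_eq_mul_div, ← neg_div]
    gcongr
    linarith [neg_abs_le μ.re]
  have hsup : c₁ / α * (t * (m - n : ℕ)) ^ α - t * (m - n : ℕ) ≤ sSup _ :=
    le_csSup hbdd ⟨_, mul_nonneg ht0 (Nat.cast_nonneg _), rfl⟩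
  have hpow := mul_rpow_le_rpow_mul ht0 (by linarith) (Nat.cast_nonneg (m - n)) hα1.le
  have hexp : -sSup ((fun x : ℝ => c₁ / α * x ^ α - x) '' Set.Ici 0) ≤
      (m - n : ℕ) * t + μ.re / α * D := by
    have : -(c₁ / α * t) * ((m - n : ℕ) : ℝ) ^ α ≤ μ.re / α * D := by
      nlinarith [mul_nonneg ha ht0]
    linarith [mul_le_mul_of_nonneg_left hpow ha]
  calc exp (-sSup _) ≤ exp ((m - n : ℕ) * t) * exp (μ.re / α * D) := by
        rw [← exp_add]; exact exp_le_exp.mpr hexp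
    _ ≤ _ := mul_le_mul_of_nonneg_right (exp_mul_one_sub_le_inv_pow hz0 _) (exp_pos _).le
end
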